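/- arXiv:1112.1020 — 3 statements merged into one kernel-verified Lean document; each statement's English description precedes it below -/
import Mathlib

section
/- Let Φ_k be monic polynomials generated by Szegő's recursion Φ_{k+1}(z) = z·Φ_k(z) − conj(α_k)·Φ_k*(z), Φ_0 = 1, with Verblunsky coefficients satisfying α_{3k} = α_{3k+1} = 0 for all k. Then for every k: Φ_{3k+1}(z) = z·Φ_{3k}(z), Φ_{3k+2}(z) = z²·Φ_{3k}(z), and Φ_{3k}(z) is a polynomial in z³, i.e., there exists a monic polynomial q_k of degree k with Φ_{3k}(z) = q_k(z³). Moreover q_k satisfies the recursion q_{k+1}(w) = w·q_k(w) − conj(α_{3k+2})·q_k*(w). -/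
open Polynomial Complex

/-- The reversed polynomial of a monic polynomial. -/
noncomputable def reversedPoly (p : Polynomial ℂ) : Polynomial ℂ :=
  (p.map (starRingEnd ℂ)).reverse

lemma reverse_expand (p : Polynomial ℂ) :
    (expand ℂ 3 p).reverse = expand ℂ 3 p.reverse := by
  rcases eq_or_ne p 0 with rfl | hp
  · simp
  unfold Polynomial.reverse
  ext m
  rw [coeff_reflect, coeff_expand (by norm_num), coeff_expand (by norm_num),
    natDegree_expand]
  set n := p.natDegree
  by_cases hm : m ≤ n * 3
  · rw [revAt_le hm]
    by_cases h3 : 3 ∣ m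
    · have h3' : 3 ∣ n * 3 - m := by omega
      rw [if_pos h3', if_pos h3, coeff_reflect, revAt_le (by omega)]
      congr 1
      obtain ⟨c, rfl⟩ := h3
      omega
    · have h3' : ¬ 3 ∣ n * 3 - m := by omega
      rw [if_neg h3', if_neg h3]
  · rw [revAt_eq_self_of_lt (by omega)]
    by_cases h3 : 3 ∣ m
    · rw [if_pos h3, if_pos h3, coeff_reflect]
      have hgt : n < m / 3 := by
        obtain ⟨c, rfl⟩ := h3; omega
      rw [coeff_eq_zero_of_natDegree_lt hgt,
        revAt_eq_self_of_lt hgt, coeff_eq_zero_of_natDegree_lt hgt]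
    · rw [if_neg h3, if_neg h3]

lemma reversedPoly_comp (p : Polynomial ℂ) :
    reversedPoly (p.comp (X ^ 3)) = (reversedPoly p).comp (X ^ 3) := by
  rw [← expand_eq_comp_X_pow, ← expand_eq_comp_X_pow]
  unfold reversedPoly
  rw [map_expand, reverse_expand]

theorem symmetry_reduced_polynomials
    (Φ : ℕ → Polynomial ℂ) (α : ℕ → ℂ)
    (hmonic : ∀ k, (Φ k).Monic) (hdeg : ∀ k, (Φ k).natDegree = k)
    (hΦ0 : Φ 0 = 1)
    (hrec : ∀ k, Φ (k + 1) = X * Φ k - C (starRingEnd ℂ (α k)) * reversedPoly (Φ k))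
    (hα0 : ∀ k, α (3 * k) = 0) (hα1 : ∀ k, α (3 * k + 1) = 0) :
    (∀ k, Φ (3 * k + 1) = X * Φ (3 * k)) ∧
    (∀ k, Φ (3 * k + 2) = X ^ 2 * Φ (3 * k)) ∧
    ∃ q : ℕ → Polynomial ℂ,
      (∀ k, (q k).Monic ∧ (q k).natDegree = k ∧ Φ (3 * k) = (q k).comp (X ^ 3)) ∧
      (∀ k, q (k + 1) = X * q k - C (starRingEnd ℂ (α (3 * k + 2))) * reversedPoly (q k)) := by
  have h1 : ∀ k, Φ (3 * k + 1) = X * Φ (3 * k) := by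
    intro k
    rw [hrec (3 * k), hα0 k]
    simp
  have h2 : ∀ k, Φ (3 * k + 2) = X ^ 2 * Φ (3 * k) := by
    intro k
    have := hrec (3 * k + 1)
    rw [hα1 k] at this
    simp only [map_zero, Polynomial.C_0, zero_mul, sub_zero] at this
    rw [this, h1 k]
    ring
  refine ⟨h1, h2, ?_⟩
  -- step recursion for Φ(3(k+1))
  have hstep : ∀ k, Φ (3 * (k + 1)) =
      X ^ 3 * Φ (3 * k) - C (starRingEnd ℂ (α (3 * k + 2))) * reversedPoly (Φ (3 * k)) := by
    intro k
    have h3 : 3 * (k + 1) = (3 * k + 2) + 1 := by ring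
    rw [h3, hrec (3 * k + 2), h2 k]
    have hrev : reversedPoly (X ^ 2 * Φ (3 * k)) = reversedPoly (Φ (3 * k)) := by
      unfold reversedPoly
      rw [Polynomial.map_mul, Polynomial.map_pow, map_X, reverse_X_pow_mul]
    rw [hrev]; ring
  set q : ℕ → Polynomial ℂ := fun k => Nat.rec 1
    (fun k qk => X * qk - C (starRingEnd ℂ (α (3 * k + 2))) * reversedPoly qk) k with hq
  have hqrec : ∀ k, q (k + 1) = X * q k - C (starRingEnd ℂ (α (3 * k + 2))) * reversedPoly (q k) :=
    fun k => rfl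
  refine ⟨q, ?_, hqrec⟩
  intro k
  induction k with
  | zero => exact ⟨monic_one, natDegree_one, by simp [hΦ0, show q 0 = 1 from rfl]⟩
  | succ k ih =>
    obtain ⟨hmon, hdegq, hcomp⟩ := ih
    have hdegrev : (reversedPoly (q k)).natDegree ≤ k := by
      unfold reversedPoly
      calc ((q k).map (starRingEnd ℂ)).reverse.natDegree
          ≤ ((q k).map (starRingEnd ℂ)).natDegree := reverse_natDegree_le _
        _ ≤ (q k).natDegree := natDegree_map_le
        _ = k := hdegq
    have hXqmon : (X * q k).Monic := monic_X.mul hmon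
    have hXqdeg : (X * q k).natDegree = k + 1 := by
      rw [natDegree_X_mul hmon.ne_zero, hdegq]
    have hdeglt : (C (starRingEnd ℂ (α (3 * k + 2))) * reversedPoly (q k)).degree <
        (X * q k).degree := by
      have h1 : (C (starRingEnd ℂ (α (3 * k + 2))) * reversedPoly (q k)).natDegree ≤ k := by
        calc (C (starRingEnd ℂ (α (3 * k + 2))) * reversedPoly (q k)).natDegree
            ≤ (C (starRingEnd ℂ (α (3 * k + 2)))).natDegree + (reversedPoly (q k)).natDegree :=
              natDegree_mul_le
          _ ≤ k := by rw [natDegree_C]; simpa using hdegrev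
      have hlt : (C (starRingEnd ℂ (α (3 * k + 2))) * reversedPoly (q k)).degree <
          ((k + 1 : ℕ) : WithBot ℕ) :=
        lt_of_le_of_lt (natDegree_le_iff_degree_le.mp h1)
          (by exact_mod_cast Nat.lt_succ_self k)
      rw [degree_eq_natDegree hXqmon.ne_zero, hXqdeg]
      exact hlt
    have hmon' : (q (k + 1)).Monic := by
      rw [hqrec, sub_eq_add_neg]
      exact hXqmon.add_of_left (by rwa [degree_neg])
    have hdeg' : (q (k + 1)).natDegree = k + 1 := by
      rw [hqrec, sub_eq_add_neg, natDegree_add_eq_left_of_degree_lt (by rwa [degree_neg]), hXqdeg]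
    refine ⟨hmon', hdeg', ?_⟩
    rw [hstep k, hcomp, hqrec, sub_comp, mul_comp, mul_comp, X_comp, C_comp,
      reversedPoly_comp]
end

section
/- Let Φ_{n−1} be a monic polynomial of degree n−1 with all its zeros in the open unit disk 𝔻 = {z : |z| < 1}, and let β ∈ ℂ with |β| = 1. Define the paraorthogonal polynomial Φ_n(z; β) = z·Φ_{n−1}(z) − β·Φ_{n−1}*(z). Then every zero of Φ_n(·; β) lies on the unit circle. -/
/-!
Factor `Φ = ∏ (X - r)` over its roots, so that `Φ* = ∏ (1 - r̄ X)`. For `‖r‖ ≤ 1` the identity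
`|1 - r̄ z|² - |z - r|² = (1 - |z|²)(1 - |r|²)` compares the factors: `|Φ(z)| ≤ |Φ*(z)|` inside the
closed disk and `|Φ*(z)| ≤ |Φ(z)|` outside it. A zero of `z Φ(z) - β Φ*(z)` satisfies
`‖z‖ |Φ(z)| = |Φ*(z)|`, which is incompatible with either comparison off the circle, because
`Φ*` has no zeros in the open disk and `Φ` none outside it.
-/

open Polynomial Complex

open ComplexConjugate

lemma reversedPoly_one : reversedPoly 1 = 1 := by
  simpa [reversedPoly] using reverse_C (1 : ℂ)

lemma reversedPoly_mul (p q : ℂ[X]) :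
    reversedPoly (p * q) = reversedPoly p * reversedPoly q := by
  rw [reversedPoly, Polynomial.map_mul, reverse_mul_of_domain, reversedPoly, reversedPoly]

lemma reversedPoly_multiset_prod (s : Multiset ℂ[X]) :
    reversedPoly s.prod = (s.map reversedPoly).prod := by
  induction s using Multiset.induction with
  | empty => exact reversedPoly_one
  | cons p s ih =>
    rw [Multiset.prod_cons, reversedPoly_mul, ih, Multiset.map_cons, Multiset.prod_cons]

lemma reversedPoly_X_sub_C (r : ℂ) : reversedPoly (X - C r) = 1 - C (conj r) * X := by
  rw [reversedPoly, Polynomial.map_sub, map_X, map_C, reverse, natDegree_X_sub_C]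
  simp

lemma eval_reversedPoly_of_monic {Φ : ℂ[X]} (hΦ : Φ.Monic) (z : ℂ) :
    (reversedPoly Φ).eval z = (Φ.roots.map fun r => 1 - conj r * z).prod := by
  rw [(IsAlgClosed.splits Φ).eq_prod_roots_of_monic hΦ, reversedPoly_multiset_prod,
    Multiset.map_map, eval_multiset_prod, Multiset.map_map, roots_multiset_prod_X_sub_C]
  simp [Function.comp_def, reversedPoly_X_sub_C]

lemma normSq_one_sub_conj_mul_sub_normSq_sub (r z : ℂ) :
    normSq (1 - conj r * z) - normSq (z - r) = (1 - normSq z) * (1 - normSq r) := by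
  simp only [normSq_apply, sub_re, sub_im, mul_re, mul_im, conj_re, conj_im, one_re, one_im]
  ring

lemma norm_sub_le_norm_one_sub_conj_mul {r z : ℂ} (hr : ‖r‖ ≤ 1) (hz : ‖z‖ ≤ 1) :
    ‖z - r‖ ≤ ‖1 - conj r * z‖ := by
  have key := normSq_one_sub_conj_mul_sub_normSq_sub r z
  rw [← sq_le_sq₀ (norm_nonneg _) (norm_nonneg _)]
  simp only [← Complex.sq_norm] at key
  have hz2 : ‖z‖ ^ 2 ≤ 1 := pow_le_one₀ (norm_nonneg z) hz
  have hr2 : ‖r‖ ^ 2 ≤ 1 := pow_le_one₀ (norm_nonneg r) hr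
  linarith [mul_nonneg (sub_nonneg.2 hz2) (sub_nonneg.2 hr2)]

lemma norm_one_sub_conj_mul_le_norm_sub {r z : ℂ} (hr : ‖r‖ ≤ 1) (hz : 1 ≤ ‖z‖) :
    ‖1 - conj r * z‖ ≤ ‖z - r‖ := by
  have key := normSq_one_sub_conj_mul_sub_normSq_sub r z
  rw [← sq_le_sq₀ (norm_nonneg _) (norm_nonneg _)]
  simp only [← Complex.sq_norm] at key
  have hz2 : 1 ≤ ‖z‖ ^ 2 := one_le_pow₀ hz
  have hr2 : ‖r‖ ^ 2 ≤ 1 := pow_le_one₀ (norm_nonneg r) hr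
  linarith [mul_nonneg (sub_nonneg.2 hz2) (sub_nonneg.2 hr2)]

lemma norm_multiset_prod {α : Type*} [NormedField α] (s : Multiset α) :
    ‖s.prod‖ = (s.map (‖·‖)).prod :=
  map_multiset_prod (normHom : α →*₀ ℝ) s

section

variable {Φ : ℂ[X]} (hΦ : Φ.Monic) (hroots : ∀ r ∈ Φ.roots, ‖r‖ ≤ 1) {z : ℂ}
include hΦ hroots

lemma norm_eval_le_norm_eval_reversedPoly (hz : ‖z‖ ≤ 1) :
    ‖Φ.eval z‖ ≤ ‖(reversedPoly Φ).eval z‖ := by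
  rw [(IsAlgClosed.splits Φ).eval_eq_prod_roots_of_monic hΦ, eval_reversedPoly_of_monic hΦ,
    norm_multiset_prod, norm_multiset_prod, Multiset.map_map, Multiset.map_map]
  exact Multiset.prod_map_le_prod_map₀ _ _ (fun _ _ => norm_nonneg _)
    fun r hr => norm_sub_le_norm_one_sub_conj_mul (hroots r hr) hz

lemma norm_eval_reversedPoly_le_norm_eval (hz : 1 ≤ ‖z‖) :
    ‖(reversedPoly Φ).eval z‖ ≤ ‖Φ.eval z‖ := by
  rw [(IsAlgClosed.splits Φ).eval_eq_prod_roots_of_monic hΦ, eval_reversedPoly_of_monic hΦ,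
    norm_multiset_prod, norm_multiset_prod, Multiset.map_map, Multiset.map_map]
  exact Multiset.prod_map_le_prod_map₀ _ _ (fun _ _ => norm_nonneg _)
    fun r hr => norm_one_sub_conj_mul_le_norm_sub (hroots r hr) hz

lemma eval_reversedPoly_ne_zero (hz : ‖z‖ < 1) : (reversedPoly Φ).eval z ≠ 0 := by
  rw [eval_reversedPoly_of_monic hΦ]
  refine Multiset.prod_ne_zero fun h => ?_
  obtain ⟨r, hr, hr0⟩ := Multiset.mem_map.1 h
  have : ‖conj r * z‖ < 1 := by
    rw [norm_mul, RCLike.norm_conj]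
    exact mul_lt_one_of_nonneg_of_lt_one_right (hroots r hr) (norm_nonneg z) hz
  rw [sub_eq_zero] at hr0
  simp [← hr0] at this

end

theorem paraorthogonal_zeros_on_circle
    (Φ : Polynomial ℂ) (hmonic : Φ.Monic)
    (hroots : ∀ z : ℂ, Φ.eval z = 0 → ‖z‖ < 1)
    (β : ℂ) (hβ : ‖β‖ = 1) :
    ∀ z : ℂ, (X * Φ - C β * reversedPoly Φ).eval z = 0 → ‖z‖ = 1 := by
  intro z hz
  have hroots' : ∀ r ∈ Φ.roots, ‖r‖ ≤ 1 := fun r hr => (hroots r (isRoot_of_mem_roots hr)).le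
  have hnorm : ‖z‖ * ‖Φ.eval z‖ = ‖(reversedPoly Φ).eval z‖ := by
    rw [eval_sub, eval_mul, eval_X, eval_mul, eval_C, sub_eq_zero] at hz
    rw [← norm_mul, hz, norm_mul, hβ, one_mul]
  rcases lt_trichotomy ‖z‖ 1 with hlt | hone | hgt
  · have hle := norm_eval_le_norm_eval_reversedPoly hmonic hroots' hlt.le
    have hpos := norm_pos_iff.2 (eval_reversedPoly_ne_zero hmonic hroots' hlt)
    have : ‖(reversedPoly Φ).eval z‖ < ‖(reversedPoly Φ).eval z‖ :=
      calc ‖(reversedPoly Φ).eval z‖ = ‖z‖ * ‖Φ.eval z‖ := hnorm.symm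
        _ ≤ ‖z‖ * ‖(reversedPoly Φ).eval z‖ := by gcongr
        _ < ‖(reversedPoly Φ).eval z‖ := mul_lt_of_lt_one_left hpos hlt
    exact this.false.elim
  · exact hone
  · have hle := norm_eval_reversedPoly_le_norm_eval hmonic hroots' hgt.le
    have hpos : 0 < ‖Φ.eval z‖ := norm_pos_iff.2 fun h => (hroots z h).not_gt hgt
    have : ‖Φ.eval z‖ < ‖Φ.eval z‖ :=
      calc ‖Φ.eval z‖ < ‖z‖ * ‖Φ.eval z‖ := lt_mul_left hpos hgt
        _ = ‖(reversedPoly Φ).eval z‖ := hnorm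
        _ ≤ ‖Φ.eval z‖ := hle
    exact this.false.elim
end

section
/- Let T be a primitive (irreducible and aperiodic) matrix with strictly positive entries on its nonzero pattern, and for d ∈ ℝ let T^{(d)} denote the matrix with entries (T_{ij})^d on the nonzero pattern and 0 elsewhere, where all nonzero T_{ij} satisfy 0 < T_{ij} < 1. Then the spectral radius function d ↦ λ(T^{(d)}) is strictly decreasing and continuous on ℝ, tends to 0 as d → ∞, and λ(T^{(0)}) ≥ 1 if T has at least one nonzero entry per row; consequently there is at most one d ≥ 0 with λ(T^{(d)}) = 1. -/
open Matrix Filter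

/-- The Perron--Frobenius eigenvalue (spectral radius) of a real square matrix,
computed via the spectrum of its complexification. -/
noncomputable def perronRadius {n : ℕ} (M : Matrix (Fin n) (Fin n) ℝ) : ENNReal :=
  ⨆ k ∈ spectrum ℂ (M.map (Complex.ofReal)), (‖k‖₊ : ENNReal)

/-- The entrywise `d`-th power of `T` on its nonzero pattern. -/
noncomputable def entrywisePow {n : ℕ} (T : Matrix (Fin n) (Fin n) ℝ) (d : ℝ) :
    Matrix (Fin n) (Fin n) ℝ :=
  fun i j => if T i j ≠ 0 then (T i j) ^ d else 0

/-!
Gelfand's formula for the ℓ∞ operator norm makes the spectral radius monotone and positively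
homogeneous on entrywise nonnegative matrices, and bounds it below by the smallest row sum.
Entrywise, `T^(d') = T^(d' - d) * T^(d)` on the pattern of `T`, so with `a` the smallest nonzero
entry and `b < 1` the largest one, `λ(T^(d'))` lies between `a^|d' - d| λ(T^(d))` and
`a^(-|d' - d|) λ(T^(d))`, and below `b^(d' - d) λ(T^(d))` when `d ≤ d'`. This gives continuity,
strict decrease and decay to `0`; `T^(0)` is the `0/1` pattern of `T`, with a `1` in every row,
so `λ(T^(0)) ≥ 1`.
-/

open scoped NNReal ENNReal Topology

section GelfandFormula

variable {A : Type*} [NormedRing A] [NormedAlgebra ℂ A] [CompleteSpace A]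

theorem spectrum.spectralRadius_le_mul_of_nnnorm_pow_le {a b : A} {c : ℝ≥0}
    (h : ∀ k, ‖a ^ k‖₊ ≤ c ^ k * ‖b ^ k‖₊) :
    spectralRadius ℂ a ≤ c * spectralRadius ℂ b := by
  refine le_of_tendsto_of_tendsto (gelfand_formula a)
    (ENNReal.Tendsto.const_mul (gelfand_formula b) (Or.inr ENNReal.coe_ne_top)) ?_
  filter_upwards [eventually_ne_atTop 0] with k hk
  calc (‖a ^ k‖₊ : ℝ≥0∞) ^ (1 / k : ℝ) ≤ ((c : ℝ≥0∞) ^ k * ‖b ^ k‖₊) ^ (1 / k : ℝ) := by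
        gcongr; exact_mod_cast h k
    _ = c * (‖b ^ k‖₊ : ℝ≥0∞) ^ (1 / k : ℝ) := by
        rw [ENNReal.mul_rpow_of_nonneg _ _ (by positivity), one_div,
          ENNReal.pow_rpow_inv_natCast hk]

theorem spectrum.le_spectralRadius_of_pow_le_nnnorm {a : A} {c : ℝ≥0}
    (h : ∀ k, c ^ k ≤ ‖a ^ k‖₊) : (c : ℝ≥0∞) ≤ spectralRadius ℂ a := by
  refine ge_of_tendsto (gelfand_formula a) ?_
  filter_upwards [eventually_ne_atTop 0] with k hk
  calc (c : ℝ≥0∞) = ((c : ℝ≥0∞) ^ k) ^ (1 / k : ℝ) := by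
        rw [one_div, ENNReal.pow_rpow_inv_natCast hk]
    _ ≤ (‖a ^ k‖₊ : ℝ≥0∞) ^ (1 / k : ℝ) := by gcongr; exact_mod_cast h k

end GelfandFormula

section NonnegMatrix

variable {ι : Type*} [Fintype ι] [DecidableEq ι] {A B : Matrix ι ι ℝ}

theorem Matrix.pow_apply_le_pow_apply (hA : ∀ i j, 0 ≤ A i j) (hAB : ∀ i j, A i j ≤ B i j)
    (k : ℕ) (i j : ι) : (A ^ k) i j ≤ (B ^ k) i j := by
  induction k generalizing j with
  | zero => rfl
  | succ k ih =>
    rw [pow_succ, pow_succ, mul_apply, mul_apply]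
    exact Finset.sum_le_sum fun l _ => mul_le_mul (ih l) (hAB l j) (hA l j)
      (pow_apply_nonneg (fun i j => (hA i j).trans (hAB i j)) k i l)

theorem Matrix.pow_le_rowSum_pow (hA : ∀ i j, 0 ≤ A i j) {c : ℝ} (hc : 0 ≤ c)
    (h : ∀ i, c ≤ ∑ j, A i j) (k : ℕ) (i : ι) : c ^ k ≤ ∑ j, (A ^ k) i j := by
  induction k generalizing i with
  | zero => simp [one_apply]
  | succ k ih =>
    calc c ^ (k + 1) = c ^ k * c := pow_succ c k
      _ ≤ c ^ k * ∑ l, A i l := by gcongr; exact h i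
      _ ≤ ∑ l, A i l * ∑ j, (A ^ k) l j := by
        rw [Finset.mul_sum]
        exact Finset.sum_le_sum fun l _ => by rw [mul_comm]; gcongr; exacts [hA i l, ih l]
      _ = ∑ j, (A ^ (k + 1)) i j := by
        simp only [pow_succ', mul_apply, Finset.mul_sum]
        exact Finset.sum_comm

end NonnegMatrix

section LinftyNorm

attribute [local instance] Matrix.linftyOpNormedAddCommGroup

variable {m ι : Type*} [Fintype m] [Fintype ι] {A B : Matrix m ι ℝ}

theorem Matrix.nnnorm_map_ofReal_le (hA : ∀ i j, 0 ≤ A i j) (hAB : ∀ i j, A i j ≤ B i j) :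
    ‖A.map Complex.ofReal‖₊ ≤ ‖B.map Complex.ofReal‖₊ := by
  simp only [linfty_opNNNorm_def, map_apply, Complex.nnnorm_real]
  refine Finset.sup_mono_fun fun i _ => Finset.sum_le_sum fun j _ => ?_
  rw [← NNReal.coe_le_coe, coe_nnnorm, coe_nnnorm, Real.norm_of_nonneg (hA i j),
    Real.norm_of_nonneg ((hA i j).trans (hAB i j))]
  exact hAB i j

theorem Matrix.rowSum_le_nnnorm_map_ofReal (hA : ∀ i j, 0 ≤ A i j) (i : m) :
    ∑ j, A i j ≤ ‖A.map Complex.ofReal‖₊ := by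
  rw [linfty_opNNNorm_def]
  refine le_trans ?_ (NNReal.coe_le_coe.2 (Finset.le_sup (Finset.mem_univ i)))
  simp [map_apply, Real.norm_of_nonneg (hA i _)]

end LinftyNorm

theorem Matrix.map_ofReal_pow {ι : Type*} [Fintype ι] [DecidableEq ι] (A : Matrix ι ι ℝ)
    (k : ℕ) : (A ^ k).map Complex.ofReal = A.map Complex.ofReal ^ k :=
  map_pow Complex.ofRealHom.mapMatrix A k

section PerronRadius

attribute [local instance] Matrix.linftyOpNormedRing Matrix.linftyOpNormedAlgebra

variable {n : ℕ} {A B : Matrix (Fin n) (Fin n) ℝ}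

theorem perronRadius_le_mul (hB : ∀ i j, 0 ≤ B i j) {c : ℝ} (hc : 0 ≤ c)
    (hBA : ∀ i j, B i j ≤ c * A i j) :
    perronRadius B ≤ ENNReal.ofReal c * perronRadius A := by
  refine spectrum.spectralRadius_le_mul_of_nnnorm_pow_le fun k => ?_
  have hcA : ∀ i j, B i j ≤ (c • A) i j := hBA
  calc ‖B.map Complex.ofReal ^ k‖₊ ≤ ‖((c • A) ^ k).map Complex.ofReal‖₊ := by
        rw [← map_ofReal_pow]
        exact nnnorm_map_ofReal_le (pow_apply_nonneg hB k) (pow_apply_le_pow_apply hB hcA k)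
    _ = c.toNNReal ^ k * ‖A.map Complex.ofReal ^ k‖₊ := by
        have : ((c • A) ^ k).map Complex.ofReal = ((c : ℂ) ^ k) • (A ^ k).map Complex.ofReal := by
          ext i j; simp [smul_pow]
        rw [this, nnnorm_smul, map_ofReal_pow, nnnorm_pow, Complex.nnnorm_real,
          Real.nnnorm_of_nonneg hc, Real.toNNReal_of_nonneg hc]

theorem le_perronRadius_of_le_rowSum (hn : 0 < n) (hA : ∀ i j, 0 ≤ A i j) {c : ℝ} (hc : 0 ≤ c)
    (h : ∀ i, c ≤ ∑ j, A i j) : ENNReal.ofReal c ≤ perronRadius A := by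
  refine spectrum.le_spectralRadius_of_pow_le_nnnorm fun k => ?_
  rw [← map_ofReal_pow, ← NNReal.coe_le_coe, NNReal.coe_pow, Real.coe_toNNReal c hc]
  exact (pow_le_rowSum_pow hA hc h k ⟨0, hn⟩).trans
    (rowSum_le_nnnorm_map_ofReal (pow_apply_nonneg hA k) _)

theorem perronRadius_ne_top (hn : 0 < n) (A : Matrix (Fin n) (Fin n) ℝ) : perronRadius A ≠ ⊤ := by
  have : Nonempty (Fin n) := ⟨⟨0, hn⟩⟩
  have : NormOneClass (Matrix (Fin n) (Fin n) ℂ) := linfty_opNormOneClass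
  exact ne_top_of_le_ne_top ENNReal.coe_ne_top (spectrum.spectralRadius_le_nnnorm _)

end PerronRadius

theorem Real.rpow_le_inv_rpow_abs {a t : ℝ} (ha : 0 < a) (hat : a ≤ t) (ht : t ≤ 1) (δ : ℝ) :
    t ^ δ ≤ a⁻¹ ^ |δ| := by
  have ht0 : 0 < t := ha.trans_le hat
  calc t ^ δ ≤ t ^ (-|δ|) := Real.rpow_le_rpow_of_exponent_ge ht0 ht (neg_abs_le δ)
    _ = t⁻¹ ^ |δ| := by rw [Real.rpow_neg ht0.le, Real.inv_rpow ht0.le]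
    _ ≤ a⁻¹ ^ |δ| := by gcongr

theorem continuous_of_le_ofReal_rpow_abs_sub_mul {f : ℝ → ℝ≥0∞} {K : ℝ} (hK : 0 < K)
    (h : ∀ x y, f y ≤ ENNReal.ofReal (K ^ |y - x|) * f x) : Continuous f := by
  refine continuous_iff_continuousAt.2 fun x => ?_
  have hlim (s : ℝ) :
      Tendsto (fun y => ENNReal.ofReal (K ^ (s * |y - x|)) * f x) (𝓝 x) (𝓝 (f x)) := by
    have : Tendsto (fun y => K ^ (s * |y - x|)) (𝓝 x) (𝓝 1) := by
      have hc : Continuous fun y => K ^ (s * |y - x|) := (Real.continuous_const_rpow hK.ne').comp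
        (continuous_const.mul (continuous_id.sub continuous_const).abs)
      simpa using hc.tendsto x
    simpa using ENNReal.Tendsto.mul_const (ENNReal.tendsto_ofReal this) (Or.inl (by simp))
  refine tendsto_of_tendsto_of_tendsto_of_le_of_le (hlim (-1)) (hlim 1) (fun y => ?_) fun y => ?_
  · calc ENNReal.ofReal (K ^ (-1 * |y - x|)) * f x
        ≤ ENNReal.ofReal (K ^ (-1 * |y - x|)) * (ENNReal.ofReal (K ^ |y - x|) * f y) := by
          rw [abs_sub_comm]; gcongr; exact h y x
      _ = f y := by
          rw [← mul_assoc, ← ENNReal.ofReal_mul (by positivity), ← Real.rpow_add hK]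
          simp
  · simpa using h x y

section FiniteBounds

variable {ι : Type*} [Finite ι] {T : Matrix ι ι ℝ}

theorem Matrix.exists_pos_le_of_ne_zero (hT : ∀ i j, 0 ≤ T i j) :
    ∃ a, 0 < a ∧ ∀ i j, T i j ≠ 0 → a ≤ T i j := by
  have h : ∀ᶠ a in 𝓝[>] (0 : ℝ), ∀ i j, T i j ≠ 0 → a ≤ T i j :=
    eventually_all.2 fun i => eventually_all.2 fun j => by
      by_cases hij : T i j = 0
      · exact Eventually.of_forall fun _ h => absurd hij h
      · exact ((eventually_le_nhds ((hT i j).lt_of_ne (Ne.symm hij))).filter_mono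
          nhdsWithin_le_nhds).mono fun _ h _ => h
  exact (eventually_mem_nhdsWithin.and h).exists

theorem Matrix.exists_le_of_lt_one (hT : ∀ i j, T i j < 1) :
    ∃ b, 0 ≤ b ∧ b < 1 ∧ ∀ i j, T i j ≤ b := by
  have h : ∀ᶠ b in 𝓝[<] (1 : ℝ), ∀ i j, T i j ≤ b :=
    eventually_all.2 fun i => eventually_all.2 fun j =>
      (eventually_ge_nhds (hT i j)).filter_mono nhdsWithin_le_nhds
  obtain ⟨b, ⟨hb0, hb1⟩, hb⟩ := (Eventually.and (Ioo_mem_nhdsLT zero_lt_one) h).exists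
  exact ⟨b, hb0.le, hb1, hb⟩

end FiniteBounds

section EntrywisePow

variable {n : ℕ} {T : Matrix (Fin n) (Fin n) ℝ}

theorem entrywisePow_nonneg (hT : ∀ i j, 0 ≤ T i j) (d : ℝ) (i j : Fin n) :
    0 ≤ entrywisePow T d i j := by
  unfold entrywisePow
  split_ifs
  exacts [Real.rpow_nonneg (hT i j) d, le_rfl]

theorem entrywisePow_le_mul (hT : ∀ i j, 0 ≤ T i j) {d d' c : ℝ}
    (hc : ∀ i j, T i j ≠ 0 → T i j ^ (d' - d) ≤ c) (i j : Fin n) :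
    entrywisePow T d' i j ≤ c * entrywisePow T d i j := by
  unfold entrywisePow
  split_ifs with hij
  · have hpos : 0 < T i j := (hT i j).lt_of_ne (Ne.symm hij)
    calc T i j ^ d' = T i j ^ (d' - d) * T i j ^ d := by
          rw [← Real.rpow_add hpos, sub_add_cancel]
      _ ≤ c * T i j ^ d := by gcongr; exact hc i j hij
  · simp

theorem perronRadius_entrywisePow_le (hT : ∀ i j, 0 ≤ T i j) {d d' c : ℝ} (hc0 : 0 ≤ c)
    (hc : ∀ i j, T i j ≠ 0 → T i j ^ (d' - d) ≤ c) :
    perronRadius (entrywisePow T d') ≤ ENNReal.ofReal c * perronRadius (entrywisePow T d) :=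
  perronRadius_le_mul (entrywisePow_nonneg hT d') hc0 (entrywisePow_le_mul hT hc)

theorem one_le_perronRadius_entrywisePow_zero (hn : 0 < n) (hT : ∀ i j, 0 ≤ T i j)
    (hrow : ∀ i, ∃ j, T i j ≠ 0) : 1 ≤ perronRadius (entrywisePow T 0) := by
  refine ENNReal.ofReal_one ▸ le_perronRadius_of_le_rowSum hn (entrywisePow_nonneg hT 0)
    zero_le_one fun i => ?_
  obtain ⟨j, hj⟩ := hrow i
  calc (1 : ℝ) = entrywisePow T 0 i j := by simp [entrywisePow, hj]
    _ ≤ ∑ j, entrywisePow T 0 i j :=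
      Finset.single_le_sum (fun k _ => entrywisePow_nonneg hT 0 i k) (Finset.mem_univ j)

end EntrywisePow

section SpectralRadiusFunction

variable {n : ℕ} {T : Matrix (Fin n) (Fin n) ℝ}

theorem exists_perronRadius_entrywisePow_le_rpow_abs (hT : ∀ i j, 0 ≤ T i j)
    (hT1 : ∀ i j, T i j ≤ 1) : ∃ K, 0 < K ∧ ∀ d d', perronRadius (entrywisePow T d') ≤
      ENNReal.ofReal (K ^ |d' - d|) * perronRadius (entrywisePow T d) := by
  obtain ⟨a, ha, haT⟩ := T.exists_pos_le_of_ne_zero hT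
  exact ⟨a⁻¹, inv_pos.2 ha, fun d d' => perronRadius_entrywisePow_le hT (by positivity)
    fun i j hij => Real.rpow_le_inv_rpow_abs ha (haT i j hij) (hT1 i j) _⟩

theorem continuous_perronRadius_entrywisePow (hT : ∀ i j, 0 ≤ T i j)
    (hT1 : ∀ i j, T i j ≤ 1) : Continuous fun d => perronRadius (entrywisePow T d) :=
  let ⟨_, hK, h⟩ := exists_perronRadius_entrywisePow_le_rpow_abs hT hT1
  continuous_of_le_ofReal_rpow_abs_sub_mul hK h

theorem perronRadius_entrywisePow_ne_zero (hn : 0 < n) (hT : ∀ i j, 0 ≤ T i j)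
    (hT1 : ∀ i j, T i j ≤ 1) (hrow : ∀ i, ∃ j, T i j ≠ 0) (d : ℝ) :
    perronRadius (entrywisePow T d) ≠ 0 := by
  obtain ⟨K, -, h⟩ := exists_perronRadius_entrywisePow_le_rpow_abs hT hT1
  intro h0
  have := (one_le_perronRadius_entrywisePow_zero hn hT hrow).trans (h d 0)
  simp [h0] at this

theorem strictAnti_perronRadius_entrywisePow (hn : 0 < n) (hT : ∀ i j, 0 ≤ T i j)
    (hlt : ∀ i j, T i j < 1) (hrow : ∀ i, ∃ j, T i j ≠ 0) :
    StrictAnti fun d => perronRadius (entrywisePow T d) := by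
  obtain ⟨b, hb0, hb1, hb⟩ := T.exists_le_of_lt_one hlt
  intro d d' hdd'
  have hne := perronRadius_entrywisePow_ne_zero hn hT (fun i j => (hlt i j).le) hrow d
  calc perronRadius (entrywisePow T d')
      ≤ ENNReal.ofReal (b ^ (d' - d)) * perronRadius (entrywisePow T d) :=
        perronRadius_entrywisePow_le hT (by positivity) fun i j _ =>
          Real.rpow_le_rpow (hT i j) (hb i j) (sub_nonneg.2 hdd'.le)
    _ < 1 * perronRadius (entrywisePow T d) := by
        gcongr
        · exact perronRadius_ne_top hn _
        · exact ENNReal.ofReal_lt_one.2 (Real.rpow_lt_one hb0 hb1 (sub_pos.2 hdd'))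
    _ = perronRadius (entrywisePow T d) := one_mul _

theorem tendsto_perronRadius_entrywisePow_atTop (hn : 0 < n) (hT : ∀ i j, 0 ≤ T i j)
    (hlt : ∀ i j, T i j < 1) :
    Tendsto (fun d => perronRadius (entrywisePow T d)) atTop (𝓝 0) := by
  obtain ⟨b, hb0, hb1, hb⟩ := T.exists_le_of_lt_one hlt
  have hlim : Tendsto (fun d : ℝ => ENNReal.ofReal (b ^ (d - 0)) * perronRadius (entrywisePow T 0))
      atTop (𝓝 0) := by
    have := ENNReal.Tendsto.mul_const
      (ENNReal.tendsto_ofReal (tendsto_rpow_atTop_of_base_lt_one b (by linarith) hb1))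
      (Or.inr (perronRadius_ne_top hn (entrywisePow T 0)))
    simpa using this
  refine tendsto_of_tendsto_of_tendsto_of_le_of_le' tendsto_const_nhds hlim
    (Eventually.of_forall fun _ => zero_le) ?_
  filter_upwards [eventually_ge_atTop 0] with d hd
  exact perronRadius_entrywisePow_le hT (by positivity) fun i j _ =>
    Real.rpow_le_rpow (hT i j) (hb i j) (by simpa using hd)

end SpectralRadiusFunction

theorem perron_radius_entrywise_pow_general
    {n : ℕ} (hn : 0 < n) (T : Matrix (Fin n) (Fin n) ℝ)
    (hnonneg : ∀ i j, 0 ≤ T i j) (hlt : ∀ i j, T i j < 1)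
    (hrow : ∀ i, ∃ j, T i j ≠ 0) :
    StrictAnti (fun d : ℝ => perronRadius (entrywisePow T d)) ∧
    Continuous (fun d : ℝ => perronRadius (entrywisePow T d)) ∧
    Tendsto (fun d : ℝ => perronRadius (entrywisePow T d)) atTop (nhds 0) ∧
    1 ≤ perronRadius (entrywisePow T 0) ∧
    ∀ d₁ d₂ : ℝ, 0 ≤ d₁ → 0 ≤ d₂ →
      perronRadius (entrywisePow T d₁) = 1 → perronRadius (entrywisePow T d₂) = 1 →
      d₁ = d₂ := by
  have hanti := strictAnti_perronRadius_entrywisePow hn hnonneg hlt hrow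
  exact ⟨hanti, continuous_perronRadius_entrywisePow hnonneg fun i j => (hlt i j).le,
    tendsto_perronRadius_entrywisePow_atTop hn hnonneg hlt,
    one_le_perronRadius_entrywisePow_zero hn hnonneg hrow,
    fun _ _ _ _ h₁ h₂ => hanti.injective (h₁.trans h₂.symm)⟩

theorem perron_radius_entrywise_pow
    {n : ℕ} (hn : 0 < n) (T : Matrix (Fin n) (Fin n) ℝ)
    (hnonneg : ∀ i j, 0 ≤ T i j) (hlt : ∀ i j, T i j < 1)
    (hrow : ∀ i, ∃ j, T i j ≠ 0)
    (hprim : ∃ k : ℕ, ∀ i j, 0 < (T ^ k) i j) :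
    StrictAnti (fun d : ℝ => perronRadius (entrywisePow T d)) ∧
    Continuous (fun d : ℝ => perronRadius (entrywisePow T d)) ∧
    Tendsto (fun d : ℝ => perronRadius (entrywisePow T d)) atTop (nhds 0) ∧
    1 ≤ perronRadius (entrywisePow T 0) ∧
    ∀ d₁ d₂ : ℝ, 0 ≤ d₁ → 0 ≤ d₂ →
      perronRadius (entrywisePow T d₁) = 1 → perronRadius (entrywisePow T d₂) = 1 →
      d₁ = d₂ :=
  perron_radius_entrywise_pow_general hn T hnonneg hlt hrow
end
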